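/- Let T be a leaf-ordered rooted binary tree on n leaves, and let e be an internal edge of T whose endpoints have canonical labels −k (the upper endpoint, closer to the root) and −j (the lower endpoint). If T′ is obtained from T by an NNI move across e such that in T′ the modified edge still has the node with canonical label −k as its upper endpoint, then the OLA encodings of T and T′ differ only in the entry a_j; in particular d_OLA(T, T′) = 1. -/

import Mathlib

/-- A rooted binary tree whose leaves carry natural-number labels. -/
inductive BTree : Type
  | leaf : ℕ → BTree
  | node : BTree → BTree → BTree
  deriving DecidableEq

namespace BTree

/-- The minimum leaf label in a tree (the "clade-founder" label of its root). -/
def minLeaf : BTree → ℕ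
  | leaf j => j
  | node l r => min (minLeaf l) (minLeaf r)

/-- The label of the root node of a subtree: a leaf carries its own label,
and an internal node carries its canonical label `-CS`, where `CS` is the
"clade-splitter" label, i.e. the maximum of the children's clade-founder labels. -/
def nodeLabel : BTree → ℤ
  | leaf j => (j : ℤ)
  | node l r => -(max (minLeaf l) (minLeaf r) : ℤ)

/-- The multiset of leaf labels of a tree. -/
def leafMultiset : BTree → Multiset ℕ
  | leaf j => {j}
  | node l r => leafMultiset l + leafMultiset r

/-- Canonical form for representing an *unordered* tree by an ordered one:
at each internal node the left subtree contains the smaller minimum leaf label. -/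
def Canonical : BTree → Prop
  | leaf _ => True
  | node l r => minLeaf l < minLeaf r ∧ Canonical l ∧ Canonical r

/-- `IsRBT n T` : `T` is (the canonical representative of) a leaf-ordered rooted
binary tree on `n` leaves, bijectively labeled `0, 1, ..., n-1`. -/
def IsRBT (n : ℕ) (T : BTree) : Prop :=
  Canonical T ∧ leafMultiset T = Multiset.range n

/-- Number of leaves. -/
def numLeaves : BTree → ℕ
  | leaf _ => 1
  | node l r => numLeaves l + numLeaves r

/-- Delete the leaf labeled `i` (together with its parent); return the label of
its sister node together with the remaining tree. -/
def deleteLeaf (i : ℕ) : BTree → Option (ℤ × BTree)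
  | leaf _ => none
  | node l r =>
    if l = leaf i then some (nodeLabel r, r)
    else if r = leaf i then some (nodeLabel l, l)
    else
      match deleteLeaf i l with
      | some (a, l') => some (a, node l' r)
      | none =>
        match deleteLeaf i r with
        | some (a, r') => some (a, node l r')
        | none => none

/-- Deconstruct a tree by removing leaves `m, m-1, ..., 1` in reverse order,
recording the (leaf or canonical internal) label of the sister of each removed leaf. -/
def olaEncodeAux : ℕ → BTree → List ℤ
  | 0, _ => []
  | m + 1, T =>
    match deleteLeaf (m + 1) T with
    | some (a, T') => olaEncodeAux m T' ++ [a]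
    | none => []

/-- The OLA (ordered leaf attachment) encoding `(a_1, ..., a_{n-1})` of a tree on
`n` leaves: `a_i` is the label of the node that is the sister of leaf `i` at the
step when leaf `i` is attached. -/
def olaEncode (T : BTree) : List ℤ := olaEncodeAux (numLeaves T - 1) T

/-- Attach a new leaf labeled `i` as the sister of the node whose label is `a`
(subdividing that node's parent edge). -/
def attachAt (a : ℤ) (i : ℕ) : BTree → BTree
  | leaf j => if (j : ℤ) = a then node (leaf j) (leaf i) else leaf j
  | node l r =>
    if nodeLabel (node l r) = a then node (node l r) (leaf i)
    else node (attachAt a i l) (attachAt a i r)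

/-- Helper for OLA decoding: attach leaves `i, i+1, ...` at the recorded labels. -/
def olaDecodeAux : BTree → ℕ → List ℤ → BTree
  | T, _, [] => T
  | T, i, a :: rest => olaDecodeAux (attachAt a i T) (i + 1) rest

/-- The OLA decoding: starting from the single leaf `0`, attach leaf `i` as the
sister of the node labeled `a_i`, for `i = 1, ..., n-1`. -/
def olaDecode (v : List ℤ) : BTree := olaDecodeAux (leaf 0) 1 v

end BTree

/-- `ValidCode v` : membership of `v = (a_1, ..., a_m)` in `C_m`, i.e. the entry
`a_i` (at list index `i - 1`) satisfies `-i < a_i < i`. -/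
def ValidCode (v : List ℤ) : Prop :=
  ∀ i : Fin v.length, -((i : ℤ) + 1) < v.get i ∧ v.get i < (i : ℤ) + 1

/-- The OLA distance: the Hamming distance between the OLA encodings. -/
def olaDist (T T' : BTree) : ℕ :=
  ((BTree.olaEncode T).zip (BTree.olaEncode T')).countP fun p => decide (p.1 ≠ p.2)

/-- One-hole contexts, marking the position of a subtree/edge in a tree. -/
inductive Ctx : Type
  | hole : Ctx
  | left : Ctx → BTree → Ctx
  | right : BTree → Ctx → Ctx
  deriving DecidableEq

/-- Fill the hole of a context with a tree. -/
def Ctx.fill : Ctx → BTree → BTree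
  | .hole, T => T
  | .left c r, T => BTree.node (Ctx.fill c T) r
  | .right l c, T => BTree.node l (Ctx.fill c T)

/-- Composition of contexts: `(c.comp d).fill X = c.fill (d.fill X)`. -/
def Ctx.comp : Ctx → Ctx → Ctx
  | .hole, d => d
  | .left c r, d => .left (Ctx.comp c d) r
  | .right l c, d => .right l (Ctx.comp c d)

/-- Equality of ordered binary trees as *unordered* trees (children may be swapped
at every internal node). -/
def TreeEquiv : BTree → BTree → Prop
  | .leaf i, .leaf j => i = j
  | .node l r, .node l' r' =>
      (TreeEquiv l l' ∧ TreeEquiv r r') ∨ (TreeEquiv l r' ∧ TreeEquiv r l')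
  | _, _ => False

/-- `T'` is obtained from `T` by a single NNI move: contract an internal edge
(the edge above the subtree `node A B`) and re-resolve the resulting degree-4
node in one of the two other possible ways (unordered). -/
def IsNNIMove (T T' : BTree) : Prop :=
  ∃ (c : Ctx) (A B C : BTree),
    TreeEquiv T (Ctx.fill c (BTree.node (BTree.node A B) C)) ∧
    TreeEquiv T' (Ctx.fill c (BTree.node (BTree.node A C) B))

/-- `T'` is obtained from `T` by a single rooted SPR move: prune the subtree `S`
(suppressing the resulting degree-2 node) and regraft it by subdividing an edge
of the remaining tree. -/
def IsSPRMove (T T' : BTree) : Prop :=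
  ∃ (S : BTree) (c c' : Ctx) (X Y : BTree),
    TreeEquiv T (Ctx.fill c (BTree.node S X)) ∧
    Ctx.fill c X = Ctx.fill c' Y ∧
    TreeEquiv T' (Ctx.fill c' (BTree.node S Y))

/-- The multiset of canonical labels of the internal nodes of a tree. -/
def internalLabels : BTree → Multiset ℤ
  | .leaf _ => 0
  | .node l r => BTree.nodeLabel (BTree.node l r) ::ₘ (internalLabels l + internalLabels r)

/-- `prune k T` : delete all leaves with label `≥ k` and suppress the resulting
degree-2 nodes (`none` if no leaf survives). -/
def prune (k : ℕ) : BTree → Option BTree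
  | .leaf j => if j < k then some (.leaf j) else none
  | .node l r =>
    match prune k l, prune k r with
    | some l', some r' => some (.node l' r')
    | some l', none => some l'
    | none, some r' => some r'
    | none, none => none

/-!
Write `a` for the least leaf of `A`. Since the leaves are distinct, the two label equations
force the least leaves of `B` and `C` below `a`, so `j = a`. The encoding is read off by deleting
the leaves `n - 1, n - 2, …` in turn. Down to `a + 1`, each deleted leaf lies in the context or
strictly inside `A`, `B` or `C`, and it is deleted from both trees with the same sister label:
the subtrees `((A,B),C)` and `((A,C),B)` have the same leaves and the same canonical label. When
leaf `a` is reached, `A` has shrunk to that single leaf, whose sister is `B` in one tree and `C`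
in the other; these labels differ, and what is left, `c[(B,C)]` and `c[(C,B)]`, are equal as
unordered trees.
-/

namespace BTree

theorem minLeaf_mem (T : BTree) : minLeaf T ∈ leafMultiset T := by
  induction T with
  | leaf j => simp [minLeaf, leafMultiset]
  | node l r ihl ihr =>
    rcases min_choice (minLeaf l) (minLeaf r) with h | h <;>
      simp [minLeaf, leafMultiset, h, ihl, ihr]

theorem minLeaf_le {T : BTree} {x : ℕ} (hx : x ∈ leafMultiset T) : minLeaf T ≤ x := by
  induction T with
  | leaf j => simp_all [minLeaf, leafMultiset]
  | node l r ihl ihr =>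
    rcases Multiset.mem_add.1 hx with hx | hx
    · exact (min_le_left _ _).trans (ihl hx)
    · exact (min_le_right _ _).trans (ihr hx)

theorem minLeaf_eq_of_leafMultiset_eq {X Y : BTree} (h : leafMultiset X = leafMultiset Y) :
    minLeaf X = minLeaf Y :=
  (minLeaf_le (h ▸ minLeaf_mem Y)).antisymm (minLeaf_le (h.symm ▸ minLeaf_mem X))

theorem minLeaf_ne_of_disjoint {X Y : BTree} (h : Disjoint (leafMultiset X) (leafMultiset Y)) :
    minLeaf X ≠ minLeaf Y := fun hXY =>
  Multiset.disjoint_left.1 h (minLeaf_mem X) (hXY ▸ minLeaf_mem Y)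

theorem natAbs_nodeLabel_mem (T : BTree) : (nodeLabel T).natAbs ∈ leafMultiset T := by
  cases T with
  | leaf j => simp [nodeLabel, leafMultiset]
  | node l r =>
    rcases max_choice (minLeaf l) (minLeaf r) with h | h <;>
      simp [nodeLabel, leafMultiset, ← Nat.cast_max, h, minLeaf_mem]

theorem nodeLabel_ne_of_disjoint {X Y : BTree} (h : Disjoint (leafMultiset X) (leafMultiset Y)) :
    nodeLabel X ≠ nodeLabel Y := fun hXY =>
  Multiset.disjoint_left.1 h (natAbs_nodeLabel_mem X) (hXY ▸ natAbs_nodeLabel_mem Y)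

theorem ne_leaf_of_not_mem {i : ℕ} {X : BTree} (h : i ∉ leafMultiset X) : X ≠ leaf i := by
  rintro rfl
  simp [leafMultiset] at h

theorem card_leafMultiset (T : BTree) : Multiset.card (leafMultiset T) = numLeaves T := by
  induction T with
  | leaf j => rfl
  | node l r ihl ihr => simp [leafMultiset, numLeaves, ihl, ihr]

theorem eq_leaf_minLeaf {A : BTree} (hA : (leafMultiset A).Nodup)
    (hle : ∀ x ∈ leafMultiset A, x ≤ minLeaf A) : A = leaf (minLeaf A) := by
  cases A with
  | leaf j => rfl
  | node l r =>
    exfalso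
    have hl := minLeaf_mem l
    have hr := minLeaf_mem r
    have hlr : minLeaf l = minLeaf r := by
      have := hle _ (Multiset.mem_add.2 (Or.inl hl))
      have := hle _ (Multiset.mem_add.2 (Or.inr hr))
      simp only [minLeaf] at *
      omega
    exact minLeaf_ne_of_disjoint (Multiset.nodup_add.1 hA).2.2 hlr

theorem deleteLeaf_node (i : ℕ) (l r : BTree) :
    deleteLeaf i (node l r) =
      if l = leaf i then some (nodeLabel r, r)
      else if r = leaf i then some (nodeLabel l, l)
      else
        match deleteLeaf i l with
        | some (a, l') => some (a, node l' r)
        | none =>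
          match deleteLeaf i r with
          | some (a, r') => some (a, node l r')
          | none => none := rfl

theorem deleteLeaf_eq_none {i : ℕ} {T : BTree} (h : i ∉ leafMultiset T) :
    deleteLeaf i T = none := by
  induction T with
  | leaf j => rfl
  | node l r ihl ihr =>
    simp only [leafMultiset, Multiset.mem_add, not_or] at h
    rw [deleteLeaf_node, if_neg (ne_leaf_of_not_mem h.1), if_neg (ne_leaf_of_not_mem h.2),
      ihl h.1, ihr h.2]

theorem leafMultiset_of_deleteLeaf {i : ℕ} {T T' : BTree} {a : ℤ}
    (h : deleteLeaf i T = some (a, T')) : i ::ₘ leafMultiset T' = leafMultiset T := by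
  induction T generalizing T' a with
  | leaf j => simp [deleteLeaf] at h
  | node l r ihl ihr =>
    rw [deleteLeaf_node] at h
    split_ifs at h with hl hr
    · cases h; subst hl
      simp [leafMultiset, Multiset.singleton_add]
    · cases h; subst hr
      rw [leafMultiset, leafMultiset, add_comm, Multiset.singleton_add]
    rcases hdl : deleteLeaf i l with _ | ⟨a₁, l'⟩ <;>
      rcases hdr : deleteLeaf i r with _ | ⟨a₂, r'⟩ <;> simp only [hdl, hdr] at h <;> cases h
    · simp [leafMultiset, ← ihr hdr, Multiset.add_cons]
    all_goals simp [leafMultiset, ← ihl hdl]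

theorem mem_of_deleteLeaf {i : ℕ} {T T' : BTree} {a : ℤ}
    (h : deleteLeaf i T = some (a, T')) : i ∈ leafMultiset T :=
  leafMultiset_of_deleteLeaf h ▸ Multiset.mem_cons_self i _

theorem ne_leaf_of_deleteLeaf {i j : ℕ} {T : BTree} {p : ℤ × BTree}
    (h : deleteLeaf i T = some p) : T ≠ leaf j := by
  rintro rfl
  simp [deleteLeaf] at h

theorem exists_deleteLeaf {i : ℕ} {T : BTree} (h : i ∈ leafMultiset T) (hT : T ≠ leaf i) :
    ∃ a T', deleteLeaf i T = some (a, T') := by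
  induction T with
  | leaf j => simp_all [leafMultiset]
  | node l r ihl ihr =>
    rw [deleteLeaf_node]
    split_ifs with hl hr
    · exact ⟨_, _, rfl⟩
    · exact ⟨_, _, rfl⟩
    by_cases hil : i ∈ leafMultiset l
    · obtain ⟨a, l', hdl⟩ := ihl hil hl
      exact ⟨a, node l' r, by rw [hdl]⟩
    · obtain ⟨a, r', hdr⟩ := ihr ((Multiset.mem_add.1 h).resolve_left hil) hr
      exact ⟨a, node l r', by rw [deleteLeaf_eq_none hil, hdr]⟩

theorem exists_deleteLeaf_minLeaf {i : ℕ} {T : BTree} (h : i ∈ leafMultiset T)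
    (hi : minLeaf T ≠ i) : ∃ a T', deleteLeaf i T = some (a, T') ∧ minLeaf T' = minLeaf T := by
  obtain ⟨a, T', hd⟩ := exists_deleteLeaf h (by rintro rfl; exact hi rfl)
  have hT' := leafMultiset_of_deleteLeaf hd
  refine ⟨a, T', hd, (minLeaf_le ?_).antisymm (minLeaf_le ?_)⟩
  · have := minLeaf_mem T
    rw [← hT', Multiset.mem_cons] at this
    exact this.resolve_left hi
  · exact hT' ▸ Multiset.mem_cons_of_mem (minLeaf_mem T')

theorem olaEncodeAux_succ_of_deleteLeaf {m : ℕ} {T T' : BTree} {a : ℤ}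
    (h : deleteLeaf (m + 1) T = some (a, T')) :
    olaEncodeAux (m + 1) T = olaEncodeAux m T' ++ [a] := by
  rw [olaEncodeAux, h]

theorem leafMultiset_of_deleteLeaf_range {m : ℕ} {T T' : BTree} {a : ℤ}
    (hT : leafMultiset T = Multiset.range (m + 1)) (h : deleteLeaf m T = some (a, T')) :
    leafMultiset T' = Multiset.range m := by
  rw [← Multiset.cons_inj_right m, leafMultiset_of_deleteLeaf h, hT, Multiset.range_succ]

theorem length_olaEncodeAux (m : ℕ) {T : BTree} (hT : leafMultiset T = Multiset.range (m + 1)) :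
    (olaEncodeAux m T).length = m := by
  induction m generalizing T with
  | zero => rfl
  | succ m ih =>
    have hmem : m + 1 ∈ leafMultiset T := by simp [hT]
    obtain ⟨a, T', hd⟩ := exists_deleteLeaf hmem (by
      rintro rfl
      simpa [leafMultiset] using congrArg Multiset.card hT)
    simp [olaEncodeAux_succ_of_deleteLeaf hd, ih (leafMultiset_of_deleteLeaf_range hT hd)]

end BTree

namespace TreeEquiv

open BTree

theorem refl : ∀ T : BTree, TreeEquiv T T
  | .leaf _ => rfl
  | .node l r => Or.inl ⟨refl l, refl r⟩

theorem eq_leaf_iff {T U : BTree} (h : TreeEquiv T U) {i : ℕ} : T = leaf i ↔ U = leaf i := by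
  cases T <;> cases U <;> simp_all [TreeEquiv]

theorem leafMultiset_eq : ∀ {T U : BTree}, TreeEquiv T U → leafMultiset T = leafMultiset U
  | .leaf _, .leaf _, h => by cases (h : _ = _); rfl
  | .node _ _, .node _ _, .inl ⟨h₁, h₂⟩ => by
    simp [leafMultiset, leafMultiset_eq h₁, leafMultiset_eq h₂]
  | .node _ _, .node _ _, .inr ⟨h₁, h₂⟩ => by
    simp [leafMultiset, leafMultiset_eq h₁, leafMultiset_eq h₂, add_comm]

theorem nodeLabel_eq : ∀ {T U : BTree}, TreeEquiv T U → nodeLabel T = nodeLabel U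
  | .leaf _, .leaf _, h => by cases (h : _ = _); rfl
  | .node _ _, .node _ _, .inl ⟨h₁, h₂⟩ => by
    simp [nodeLabel, minLeaf_eq_of_leafMultiset_eq (leafMultiset_eq h₁),
      minLeaf_eq_of_leafMultiset_eq (leafMultiset_eq h₂)]
  | .node _ _, .node _ _, .inr ⟨h₁, h₂⟩ => by
    simp [nodeLabel, minLeaf_eq_of_leafMultiset_eq (leafMultiset_eq h₁),
      minLeaf_eq_of_leafMultiset_eq (leafMultiset_eq h₂), max_comm]

theorem fill {X Y : BTree} (h : TreeEquiv X Y) : ∀ c : Ctx, TreeEquiv (c.fill X) (c.fill Y)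
  | .hole => h
  | .left c r => .inl ⟨fill h c, .refl r⟩
  | .right l c => .inl ⟨.refl l, fill h c⟩

end TreeEquiv

abbrev DeletionEquiv : Option (ℤ × BTree) → Option (ℤ × BTree) → Prop :=
  Option.Rel fun p q => p.1 = q.1 ∧ TreeEquiv p.2 q.2

namespace BTree

theorem deleteLeaf_node_congr {i : ℕ} {l r l' r' : BTree} (hl : TreeEquiv l l')
    (hr : TreeEquiv r r') (dl : DeletionEquiv (deleteLeaf i l) (deleteLeaf i l'))
    (dr : DeletionEquiv (deleteLeaf i r) (deleteLeaf i r')) :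
    DeletionEquiv (deleteLeaf i (node l r)) (deleteLeaf i (node l' r')) := by
  simp only [deleteLeaf_node, hl.eq_leaf_iff, hr.eq_leaf_iff]
  split_ifs
  · exact .some ⟨hr.nodeLabel_eq, hr⟩
  · exact .some ⟨hl.nodeLabel_eq, hl⟩
  generalize deleteLeaf i l = x, deleteLeaf i l' = x' at dl
  generalize deleteLeaf i r = y, deleteLeaf i r' = y' at dr
  rcases dl with ⟨⟨ha, hl₁⟩⟩ | _
  · exact .some ⟨ha, .inl ⟨hl₁, hr⟩⟩
  rcases dr with ⟨⟨ha, hr₁⟩⟩ | _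
  · exact .some ⟨ha, .inl ⟨hl, hr₁⟩⟩
  · exact .none

/-- Since `l` and `r` share no leaf, the order in which `deleteLeaf` searches them is irrelevant. -/
theorem deleteLeaf_node_congr_swap {i : ℕ} {l r l' r' : BTree}
    (hd : Disjoint (leafMultiset l) (leafMultiset r)) (hl : TreeEquiv l l')
    (hr : TreeEquiv r r') (dl : DeletionEquiv (deleteLeaf i l) (deleteLeaf i l'))
    (dr : DeletionEquiv (deleteLeaf i r) (deleteLeaf i r')) :
    DeletionEquiv (deleteLeaf i (node l r)) (deleteLeaf i (node r' l')) := by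
  have hnone : deleteLeaf i l = none ∨ deleteLeaf i r = none := by
    by_cases hi : i ∈ leafMultiset l
    · exact .inr (deleteLeaf_eq_none (Multiset.disjoint_left.1 hd hi))
    · exact .inl (deleteLeaf_eq_none hi)
  have hlr : l = leaf i → r ≠ leaf i := by
    rintro rfl rfl
    simp [leafMultiset] at hd
  simp only [deleteLeaf_node, ne_eq, hl.eq_leaf_iff, hr.eq_leaf_iff] at hlr ⊢
  split_ifs with h₁ h₂ h₃
  · exact absurd h₂ (hlr h₁)
  · exact .some ⟨hr.nodeLabel_eq, hr⟩
  · exact .some ⟨hl.nodeLabel_eq, hl⟩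
  generalize deleteLeaf i l = x, deleteLeaf i l' = x' at dl hnone
  generalize deleteLeaf i r = y, deleteLeaf i r' = y' at dr hnone
  rcases dl with ⟨⟨ha, hl₁⟩⟩ | _ <;> rcases dr with ⟨⟨hb, hr₁⟩⟩ | _
  · simp at hnone
  · exact .some ⟨ha, .inr ⟨hl₁, hr⟩⟩
  · exact .some ⟨hb, .inr ⟨hl, hr₁⟩⟩
  · exact .none

theorem deleteLeaf_congr {i : ℕ} {T U : BTree} (h : TreeEquiv T U) (hT : (leafMultiset T).Nodup) :
    DeletionEquiv (deleteLeaf i T) (deleteLeaf i U) := by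
  induction T generalizing U with
  | leaf j =>
    rw [(h.eq_leaf_iff (i := j)).1 rfl]
    exact .none
  | node l r ihl ihr =>
    cases U with
    | leaf => exact h.elim
    | node l' r' =>
      obtain ⟨hl, hr, hd⟩ := Multiset.nodup_add.1 hT
      rcases h with ⟨h₁, h₂⟩ | ⟨h₁, h₂⟩
      · exact deleteLeaf_node_congr h₁ h₂ (ihl h₁ hl) (ihr h₂ hr)
      · exact deleteLeaf_node_congr_swap hd h₁ h₂ (ihl h₁ hl) (ihr h₂ hr)

theorem olaEncodeAux_congr (m : ℕ) {T U : BTree} (h : TreeEquiv T U)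
    (hT : (leafMultiset T).Nodup) : olaEncodeAux m T = olaEncodeAux m U := by
  induction m generalizing T U with
  | zero => rfl
  | succ m ih =>
    have hd := deleteLeaf_congr (i := m + 1) h hT
    rw [olaEncodeAux, olaEncodeAux]
    generalize hx : deleteLeaf (m + 1) T = x, deleteLeaf (m + 1) U = y at hd
    rcases hd with ⟨⟨ha, hT'⟩⟩ | _
    · have hnd := leafMultiset_of_deleteLeaf hx ▸ hT
      show olaEncodeAux m _ ++ [_] = olaEncodeAux m _ ++ [_]
      rw [ha, ih hT' (Multiset.nodup_cons.1 hnd).2]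
    · rfl

theorem olaEncode_eq_of_treeEquiv {n : ℕ} {T U : BTree} (hT : leafMultiset T = Multiset.range n)
    (h : TreeEquiv T U) : olaEncode T = olaEncodeAux (n - 1) U := by
  rw [olaEncode, ← card_leafMultiset, hT, Multiset.card_range,
    olaEncodeAux_congr _ h (hT ▸ Multiset.nodup_range n)]

end BTree

namespace Ctx

open BTree

def leaves : Ctx → Multiset ℕ
  | hole => 0
  | left c r => leaves c + leafMultiset r
  | right l c => leafMultiset l + leaves c

theorem leafMultiset_fill (c : Ctx) (X : BTree) :
    leafMultiset (c.fill X) = c.leaves + leafMultiset X := by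
  induction c with
  | hole => simp [fill, leaves]
  | left c r ih => simp [fill, leaves, leafMultiset, ih, add_right_comm]
  | right l c ih => simp [fill, leaves, leafMultiset, ih, add_assoc]

theorem nodup_of_nodup_fill {c : Ctx} {X : BTree} (h : (leafMultiset (c.fill X)).Nodup) :
    (leafMultiset X).Nodup := by
  rw [leafMultiset_fill] at h
  exact (Multiset.nodup_add.1 h).2.1

theorem fill_comp (c d : Ctx) (X : BTree) : (c.comp d).fill X = c.fill (d.fill X) := by
  induction c with
  | hole => rfl
  | left c r ih => simp [comp, fill, ih]
  | right l c ih => simp [comp, fill, ih]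

theorem fill_ne_leaf {i : ℕ} (c : Ctx) {X : BTree} (hX : i ∉ leafMultiset X) :
    c.fill X ≠ leaf i := by
  intro h
  have hmem : minLeaf X ∈ leafMultiset (c.fill X) := by
    rw [leafMultiset_fill]
    exact Multiset.mem_add.2 (.inr (minLeaf_mem X))
  rw [h] at hmem
  obtain rfl : minLeaf X = i := by simpa [leafMultiset] using hmem
  exact hX (minLeaf_mem X)

theorem deleteLeaf_fill_of_not_mem {i : ℕ} {c : Ctx} {X X' : BTree} {a : ℤ}
    (hc : i ∉ c.leaves) (h : deleteLeaf i X = some (a, X')) :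
    deleteLeaf i (c.fill X) = some (a, c.fill X') := by
  induction c with
  | hole => exact h
  | left c r ih =>
    simp only [leaves, Multiset.mem_add, not_or] at hc
    rw [fill, deleteLeaf_node, if_neg (ne_leaf_of_deleteLeaf (ih hc.1)),
      if_neg (ne_leaf_of_not_mem hc.2), ih hc.1]
    rfl
  | right l c ih =>
    simp only [leaves, Multiset.mem_add, not_or] at hc
    rw [fill, deleteLeaf_node, if_neg (ne_leaf_of_not_mem hc.1),
      if_neg (ne_leaf_of_deleteLeaf (ih hc.2)), deleteLeaf_eq_none hc.1, ih hc.2]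
    rfl

theorem deleteLeaf_fill_fill_of_nodup {i : ℕ} {c d : Ctx} {X X' : BTree} {a : ℤ}
    (hnd : (leafMultiset (c.fill (d.fill X))).Nodup) (h : deleteLeaf i X = some (a, X')) :
    deleteLeaf i (c.fill (d.fill X)) = some (a, c.fill (d.fill X')) := by
  rw [← fill_comp, leafMultiset_fill, Multiset.nodup_add] at hnd
  simpa only [fill_comp] using deleteLeaf_fill_of_not_mem
    (fun hc => Multiset.disjoint_left.1 hnd.2.2 hc (mem_of_deleteLeaf h)) h

theorem nodeLabel_fill_congr {X Y : BTree} (hm : leafMultiset X = leafMultiset Y)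
    (hn : nodeLabel X = nodeLabel Y) (c : Ctx) : nodeLabel (c.fill X) = nodeLabel (c.fill Y) := by
  have hmin (d : Ctx) : minLeaf (d.fill X) = minLeaf (d.fill Y) :=
    minLeaf_eq_of_leafMultiset_eq (by rw [leafMultiset_fill, leafMultiset_fill, hm])
  cases c with
  | hole => exact hn
  | left c r => simp only [fill, nodeLabel, hmin]
  | right l c => simp only [fill, nodeLabel, hmin]

theorem deleteLeaf_fill_of_mem_leaves {i : ℕ} {c : Ctx} {X Y : BTree} (hc : i ∈ c.leaves)
    (hX : i ∉ leafMultiset X) (hm : leafMultiset X = leafMultiset Y)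
    (hn : nodeLabel X = nodeLabel Y) :
    ∃ (a : ℤ) (c' : Ctx), deleteLeaf i (c.fill X) = some (a, c'.fill X) ∧
      deleteLeaf i (c.fill Y) = some (a, c'.fill Y) := by
  have hY : i ∉ leafMultiset Y := hm ▸ hX
  induction c with
  | hole => simp [leaves] at hc
  | left c r ih =>
    simp only [fill, deleteLeaf_node, if_neg (fill_ne_leaf c hX), if_neg (fill_ne_leaf c hY)]
    by_cases hr : r = leaf i
    · simp only [if_pos hr, nodeLabel_fill_congr hm hn c]
      exact ⟨_, c, rfl, rfl⟩
    simp only [if_neg hr]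
    by_cases hcc : i ∈ c.leaves
    · obtain ⟨a, c', h₁, h₂⟩ := ih hcc
      exact ⟨a, left c' r, by rw [h₁]; rfl, by rw [h₂]; rfl⟩
    have hir : i ∈ leafMultiset r := (Multiset.mem_add.1 hc).resolve_left hcc
    obtain ⟨a, r', hd⟩ := exists_deleteLeaf hir hr
    have hnot (Z : BTree) (hZ : i ∉ leafMultiset Z) : deleteLeaf i (c.fill Z) = none :=
      deleteLeaf_eq_none (by simp [leafMultiset_fill, hcc, hZ])
    rw [hnot X hX, hnot Y hY, hd]
    exact ⟨a, left c r', rfl, rfl⟩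
  | right l c ih =>
    simp only [fill, deleteLeaf_node, if_neg (fill_ne_leaf c hX), if_neg (fill_ne_leaf c hY)]
    by_cases hl : l = leaf i
    · simp only [if_pos hl, nodeLabel_fill_congr hm hn c]
      exact ⟨_, c, rfl, rfl⟩
    simp only [if_neg hl]
    by_cases hil : i ∈ leafMultiset l
    · obtain ⟨a, l', hd⟩ := exists_deleteLeaf hil hl
      rw [hd]
      exact ⟨a, right l' c, rfl, rfl⟩
    obtain ⟨a, c', h₁, h₂⟩ := ih ((Multiset.mem_add.1 hc).resolve_left hil)
    rw [deleteLeaf_eq_none hil, h₁, h₂]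
    exact ⟨a, right l c', rfl, rfl⟩

end Ctx

namespace List

variable {α : Type*}

def DiffersOnlyAt (p : ℕ) (l₁ l₂ : List α) : Prop :=
  ∃ (L M : List α) (x y : α), x ≠ y ∧ L.length = p ∧ l₁ = L ++ x :: M ∧ l₂ = L ++ y :: M

variable {p : ℕ} {l₁ l₂ : List α}

theorem DiffersOnlyAt.append (h : DiffersOnlyAt p l₁ l₂) (z : List α) :
    DiffersOnlyAt p (l₁ ++ z) (l₂ ++ z) := by
  obtain ⟨L, M, x, y, hxy, hL, rfl, rfl⟩ := h
  exact ⟨L, M ++ z, x, y, hxy, hL, by simp, by simp⟩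

theorem DiffersOnlyAt.getElem?_eq (h : DiffersOnlyAt p l₁ l₂) {i : ℕ} (hi : i ≠ p) :
    l₁[i]? = l₂[i]? := by
  obtain ⟨L, M, x, y, -, rfl, rfl, rfl⟩ := h
  rcases lt_or_gt_of_ne hi with hi | hi
  · rw [getElem?_append_left hi, getElem?_append_left hi]
  · obtain ⟨k, rfl⟩ := Nat.exists_eq_add_of_lt hi
    rw [getElem?_append_right (by omega), getElem?_append_right (by omega),
      show L.length + k + 1 - L.length = k + 1 by omega, getElem?_cons_succ, getElem?_cons_succ]

theorem DiffersOnlyAt.countP_zip_ne [DecidableEq α] (h : DiffersOnlyAt p l₁ l₂) :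
    (l₁.zip l₂).countP (fun q => decide (q.1 ≠ q.2)) = 1 := by
  obtain ⟨L, M, x, y, hxy, -, rfl, rfl⟩ := h
  have hself (K : List α) : (K.zip K).countP (fun q => decide (q.1 ≠ q.2)) = 0 := by
    simp [zip_eq_zipWith, zipWith_self]
  rw [zip_append rfl, countP_append, hself, zip_cons_cons, countP_cons, hself]
  simp [hxy]

end List

namespace BTree

theorem leafMultiset_node_node_comm (A B C : BTree) :
    leafMultiset (node (node A B) C) = leafMultiset (node (node A C) B) := by
  simp only [leafMultiset, add_right_comm]

theorem disjoint_of_nodup_node_node {A B C : BTree}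
    (h : (leafMultiset (node (node A B) C)).Nodup) :
    Disjoint (leafMultiset A) (leafMultiset B) ∧ Disjoint (leafMultiset A) (leafMultiset C) ∧
      Disjoint (leafMultiset B) (leafMultiset C) := by
  simp only [leafMultiset, Multiset.nodup_add, Multiset.disjoint_add_left] at h
  exact ⟨h.1.2.2, h.2.2.1, h.2.2.2⟩

theorem deleteLeaf_nni_of_lt {i : ℕ} {c : Ctx} {A B C : BTree}
    (hnd : (leafMultiset (c.fill (node (node A B) C))).Nodup)
    (hB : minLeaf B < minLeaf A) (hC : minLeaf C < minLeaf A)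
    (hi : i ∈ leafMultiset (c.fill (node (node A B) C))) (hAi : minLeaf A < i) :
    ∃ (a : ℤ) (c' : Ctx) (A' B' C' : BTree),
      minLeaf A' = minLeaf A ∧ minLeaf B' < minLeaf A ∧ minLeaf C' < minLeaf A ∧
      deleteLeaf i (c.fill (node (node A B) C)) = some (a, c'.fill (node (node A' B') C')) ∧
      deleteLeaf i (c.fill (node (node A C) B)) = some (a, c'.fill (node (node A' C') B')) := by
  have hm := leafMultiset_node_node_comm A B C
  have hnd' : (leafMultiset (c.fill (node (node A C) B))).Nodup := by
    rwa [Ctx.leafMultiset_fill, ← hm, ← Ctx.leafMultiset_fill]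
  rw [Ctx.leafMultiset_fill] at hi
  rcases Multiset.mem_add.1 hi with hc | hi
  · have hX : i ∉ leafMultiset (node (node A B) C) := by
      rw [Ctx.leafMultiset_fill, Multiset.nodup_add] at hnd
      exact Multiset.disjoint_left.1 hnd.2.2 hc
    have hn : nodeLabel (node (node A B) C) = nodeLabel (node (node A C) B) := by
      simp only [nodeLabel, minLeaf]
      omega
    obtain ⟨a, c', h₁, h₂⟩ := Ctx.deleteLeaf_fill_of_mem_leaves hc hX hm hn
    exact ⟨a, c', A, B, C, rfl, hB, hC, h₁, h₂⟩
  simp only [leafMultiset, Multiset.mem_add] at hi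
  rcases hi with (hiA | hiB) | hiC
  · obtain ⟨a, A', hd, hmin⟩ := exists_deleteLeaf_minLeaf hiA hAi.ne
    exact ⟨a, c, A', B, C, hmin, hB, hC,
      Ctx.deleteLeaf_fill_fill_of_nodup (d := .left (.left .hole B) C) hnd hd,
      Ctx.deleteLeaf_fill_fill_of_nodup (d := .left (.left .hole C) B) hnd' hd⟩
  · obtain ⟨a, B', hd, hmin⟩ := exists_deleteLeaf_minLeaf hiB (by omega)
    exact ⟨a, c, A, B', C, rfl, hmin ▸ hB, hC,
      Ctx.deleteLeaf_fill_fill_of_nodup (d := .left (.right A .hole) C) hnd hd,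
      Ctx.deleteLeaf_fill_fill_of_nodup (d := .right (node A C) .hole) hnd' hd⟩
  · obtain ⟨a, C', hd, hmin⟩ := exists_deleteLeaf_minLeaf hiC (by omega)
    exact ⟨a, c, A, B, C', rfl, hB, hmin ▸ hC,
      Ctx.deleteLeaf_fill_fill_of_nodup (d := .right (node A B) .hole) hnd hd,
      Ctx.deleteLeaf_fill_fill_of_nodup (d := .left (.right A .hole) B) hnd' hd⟩

theorem deleteLeaf_nni_leaf {a : ℕ} {c : Ctx} {B C : BTree}
    (hnd : (leafMultiset (c.fill (node (node (leaf a) B) C))).Nodup) :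
    deleteLeaf a (c.fill (node (node (leaf a) B) C)) = some (nodeLabel B, c.fill (node B C)) ∧
    deleteLeaf a (c.fill (node (node (leaf a) C) B)) = some (nodeLabel C, c.fill (node C B)) := by
  have hnd' : (leafMultiset (c.fill (node (node (leaf a) C) B))).Nodup := by
    rwa [Ctx.leafMultiset_fill, ← leafMultiset_node_node_comm, ← Ctx.leafMultiset_fill]
  have hd (X : BTree) : deleteLeaf a (node (leaf a) X) = some (nodeLabel X, X) := by
    rw [deleteLeaf_node, if_pos rfl]
  exact ⟨Ctx.deleteLeaf_fill_fill_of_nodup (d := .left .hole C) hnd (hd B),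
    Ctx.deleteLeaf_fill_fill_of_nodup (d := .left .hole B) hnd' (hd C)⟩

theorem olaEncodeAux_nni {a m : ℕ} (ham : a ≤ m) {c : Ctx} {A B C : BTree} (hA : minLeaf A = a)
    (hB : minLeaf B < a) (hC : minLeaf C < a)
    (hU : leafMultiset (c.fill (node (node A B) C)) = Multiset.range (m + 1)) :
    (olaEncodeAux m (c.fill (node (node A B) C))).DiffersOnlyAt (a - 1)
      (olaEncodeAux m (c.fill (node (node A C) B))) := by
  have hnd : (leafMultiset (c.fill (node (node A B) C))).Nodup := hU ▸ Multiset.nodup_range _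
  induction m, ham using Nat.le_induction generalizing c A B C with
  | base =>
    obtain rfl : A = leaf a := by
      refine hA ▸ eq_leaf_minLeaf (Ctx.nodup_of_nodup_fill (c := c.comp (.left (.left .hole B) C))
        (by rwa [Ctx.fill_comp])) fun x hx => ?_
      have : x ∈ leafMultiset (c.fill (node (node A B) C)) := by
        simp [Ctx.leafMultiset_fill, leafMultiset, hx]
      rw [hU, Multiset.mem_range] at this
      omega
    obtain ⟨a, rfl⟩ : ∃ a', a = a' + 1 := ⟨a - 1, by omega⟩
    obtain ⟨h₁, h₂⟩ := deleteLeaf_nni_leaf hnd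
    have hU' := leafMultiset_of_deleteLeaf_range hU h₁
    have hCB : TreeEquiv (c.fill (node C B)) (c.fill (node B C)) :=
      TreeEquiv.fill (X := node C B) (Y := node B C) (Or.inr ⟨.refl C, .refl B⟩) c
    have hBC := (disjoint_of_nodup_node_node (Ctx.nodup_of_nodup_fill hnd)).2.2
    rw [olaEncodeAux_succ_of_deleteLeaf h₁, olaEncodeAux_succ_of_deleteLeaf h₂,
      olaEncodeAux_congr a hCB (hCB.leafMultiset_eq ▸ hU' ▸ Multiset.nodup_range _)]
    exact ⟨_, [], _, _, nodeLabel_ne_of_disjoint hBC, length_olaEncodeAux a hU', rfl, rfl⟩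
  | succ m ham ih =>
    obtain ⟨x, c', A', B', C', hA', hB', hC', h₁, h₂⟩ :=
      deleteLeaf_nni_of_lt (i := m + 1) hnd (hA ▸ hB) (hA ▸ hC) (by simp [hU]) (by omega)
    have hU' := leafMultiset_of_deleteLeaf_range hU h₁
    rw [olaEncodeAux_succ_of_deleteLeaf h₁, olaEncodeAux_succ_of_deleteLeaf h₂]
    exact (ih (hA' ▸ hA) (hA ▸ hB') (hA ▸ hC') hU' (hU' ▸ Multiset.nodup_range _)).append _

end BTree

/-- Let `T` be a leaf-ordered rooted binary tree on `n` leaves and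
let `e` be the internal edge between the node `(A,B)` (lower endpoint, canonical
label `-j`) and the node `((A,B),C)` (upper endpoint, canonical label `-k`), sitting
in a context `c`.  If `T'` is obtained from `T` by the NNI move across `e` turning
`((A,B),C)` into `((A,C),B)` and in `T'` the modified edge still has the node with
canonical label `-k` as its upper endpoint, then the OLA encodings of `T` and `T'`
differ only in the entry `a_j`; in particular `d_OLA(T, T') = 1`. -/
theorem nni_same_upper_label_dist_one (n j k : ℕ) (T T' : BTree)
    (hT : BTree.IsRBT n T) (hT' : BTree.IsRBT n T')
    (c : Ctx) (A B C : BTree)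
    (hfill : TreeEquiv T (Ctx.fill c (BTree.node (BTree.node A B) C)))
    (hfill' : TreeEquiv T' (Ctx.fill c (BTree.node (BTree.node A C) B)))
    (hupper : BTree.nodeLabel (BTree.node (BTree.node A B) C) = -(k : ℤ))
    (hlower : BTree.nodeLabel (BTree.node A B) = -(j : ℤ))
    (hupper' : BTree.nodeLabel (BTree.node (BTree.node A C) B) = -(k : ℤ)) :
    (∀ i : ℕ, i + 1 ≠ j → (BTree.olaEncode T)[i]? = (BTree.olaEncode T')[i]?) ∧
    olaDist T T' = 1 := by
  have hU := hfill.leafMultiset_eq ▸ hT.2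
  have hnd := Ctx.nodup_of_nodup_fill (hU ▸ Multiset.nodup_range n)
  obtain ⟨hAB, hAC, hBC⟩ := BTree.disjoint_of_nodup_node_node hnd
  obtain ⟨hB, hC, rfl⟩ : BTree.minLeaf B < BTree.minLeaf A ∧ BTree.minLeaf C < BTree.minLeaf A ∧
      j = BTree.minLeaf A := by
    have := BTree.minLeaf_ne_of_disjoint hAB
    have := BTree.minLeaf_ne_of_disjoint hAC
    have := BTree.minLeaf_ne_of_disjoint hBC
    simp only [BTree.nodeLabel, BTree.minLeaf] at hupper hlower hupper'
    omega
  have hA : BTree.minLeaf A < n := Multiset.mem_range.1 <| hU ▸ by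
    simp [Ctx.leafMultiset_fill, BTree.leafMultiset, BTree.minLeaf_mem]
  have hdiff := BTree.olaEncodeAux_nni (m := n - 1) (c := c) (by omega) rfl hB hC
    (by rwa [Nat.sub_add_cancel (by omega)])
  rw [olaDist, BTree.olaEncode_eq_of_treeEquiv hT.2 hfill,
    BTree.olaEncode_eq_of_treeEquiv hT'.2 hfill']
  exact ⟨fun i hi => hdiff.getElem?_eq (by omega), hdiff.countP_zip_ne⟩
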